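/- arXiv:2107.02370 — 7 statements merged into one kernel-verified Lean document; each statement's English description precedes it below -/
import Mathlib

section
/- If $G$ is a $K_{t+1}$-free $r$-partite graph with parts of size $n$, then $\delta(G) \le (r - r/t)n$. -/
/-!
Take a maximum clique `s`; it has at most `t` vertices. By maximality every vertex is a
non-neighbour of some vertex of `s`, so the non-neighbourhoods of the vertices of `s` cover
all `N = r n` vertices, whence `N ≤ ∑_{v ∈ s} (N - deg v) ≤ |s| (N - δ) ≤ t (N - δ)`,
that is, `δ ≤ N - N / t`.
-/

open scoped Classical

/-- `G` is an `r`-partite graph on `Fin r × Fin n` with parts the fibers of `Prod.fst`. -/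
def IsPartite {r n : ℕ} (G : SimpleGraph (Fin r × Fin n)) : Prop :=
  ∀ v w, G.Adj v w → v.1 ≠ w.1

namespace SimpleGraph

variable {V : Type*} {G : SimpleGraph V}

theorem IsClique.card_le_of_cliqueFree {s : Finset V} {t : ℕ} (hs : G.IsClique s)
    (hG : G.CliqueFree (t + 1)) : s.card ≤ t := by
  by_contra! h
  obtain ⟨u, hus, hu⟩ := Finset.exists_subset_card_eq h
  exact hG u ⟨hs.subset hus, hu⟩

theorem exists_not_adj_of_maximal_isClique {s : Set V} (hs : Maximal G.IsClique s) (w : V) :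
    ∃ v ∈ s, ¬G.Adj v w := by
  by_contra! h
  have hw : w ∈ s :=
    hs.2 (hs.1.insert fun v hv _ => (h v hv).symm) (Set.subset_insert w s) (Set.mem_insert w s)
  exact G.loopless.irrefl w (h w hw)

variable [Fintype V] [DecidableRel G.Adj]

theorem card_le_sum_card_sub_degree {s : Finset V} (hs : ∀ w, ∃ v ∈ s, ¬G.Adj v w) :
    Fintype.card V ≤ ∑ v ∈ s, (Fintype.card V - G.degree v) := by
  calc Fintype.card V = (Finset.univ : Finset V).card := Finset.card_univ.symm
    _ ≤ (s.biUnion fun v => (G.neighborFinset v)ᶜ).card := Finset.card_le_card fun w _ => by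
        obtain ⟨v, hv, hvw⟩ := hs w
        exact Finset.mem_biUnion.2 ⟨v, hv, by simpa using hvw⟩
    _ ≤ ∑ v ∈ s, ((G.neighborFinset v)ᶜ).card := Finset.card_biUnion_le
    _ = ∑ v ∈ s, (Fintype.card V - G.degree v) := by
        simp only [Finset.card_compl, card_neighborFinset_eq_degree]

theorem minDegree_le_card : G.minDegree ≤ Fintype.card V :=
  G.minDegree_le_maxDegree.trans <|
    G.maxDegree_le_of_forall_degree_le _ fun v => (G.degree_lt_card_verts v).le

theorem card_add_mul_minDegree_le_of_cliqueFree {t : ℕ} (hG : G.CliqueFree (t + 1)) :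
    Fintype.card V + t * G.minDegree ≤ t * Fintype.card V := by
  obtain ⟨s, hs⟩ := G.maximumClique_exists
  obtain ⟨k, rfl⟩ := Nat.exists_eq_add_of_le (hs.isClique.card_le_of_cliqueFree hG)
  have hcover := card_le_sum_card_sub_degree
    (exists_not_adj_of_maximal_isClique (hs.isMaximalClique s))
  have hsum : ∑ v ∈ s, (Fintype.card V - G.degree v) + ∑ v ∈ s, G.degree v
      = s.card * Fintype.card V := by
    rw [← Finset.sum_add_distrib, Finset.sum_congr rfl fun v _ =>
      Nat.sub_add_cancel (G.degree_lt_card_verts v).le, Finset.sum_const, smul_eq_mul]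
  have hδs : s.card * G.minDegree ≤ ∑ v ∈ s, G.degree v := by
    simpa using Finset.card_nsmul_le_sum s _ _ fun v _ => G.minDegree_le_degree v
  have hδk : k * G.minDegree ≤ k * Fintype.card V := Nat.mul_le_mul_left k G.minDegree_le_card
  linarith

theorem minDegree_le_card_sub_card_div_of_cliqueFree {t : ℕ} (ht : 0 < t)
    (hG : G.CliqueFree (t + 1)) :
    (G.minDegree : ℚ) ≤ Fintype.card V - Fintype.card V / t := by
  have h : (Fintype.card V + t * G.minDegree : ℚ) ≤ t * Fintype.card V := by
    exact_mod_cast card_add_mul_minDegree_le_of_cliqueFree hG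
  rw [le_sub_iff_add_le, ← le_sub_iff_add_le', div_le_iff₀ (by positivity)]
  linarith

end SimpleGraph

theorem stmt1_general (n r t : ℕ) (ht : 2 ≤ t)
    (G : SimpleGraph (Fin r × Fin n))
    (hK : G.CliqueFree (t + 1)) :
    (G.minDegree : ℚ) ≤ ((r : ℚ) - (r : ℚ) / t) * n := by
  have h := G.minDegree_le_card_sub_card_div_of_cliqueFree (by omega) hK
  rw [Fintype.card_prod, Fintype.card_fin, Fintype.card_fin] at h
  push_cast at h
  linarith [show (r * n - r * n / t : ℚ) = (r - r / t) * n by ring]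

/-- If `G` is a `K_{t+1}`-free `r`-partite graph with parts of size `n`,
then `δ(G) ≤ (r - r/t)·n`. -/
theorem stmt1 (n r t : ℕ) (hn : 1 ≤ n) (ht : 2 ≤ t) (htr : t < r)
    (G : SimpleGraph (Fin r × Fin n)) (hp : IsPartite G)
    (hK : G.CliqueFree (t + 1)) :
    (G.minDegree : ℚ) ≤ ((r : ℚ) - (r : ℚ) / t) * n :=
  stmt1_general n r t ht G hK
end

section
/- The complete $t$-partite graph on $rn$ vertices with parts of size $\lceil r/t \rceil n$ or $\lfloor r/t \rfloor n$, viewed as an $r$-partite graph with parts of size $n$, is $K_{t+1}$-free and has minimum degree at least $(r - \lceil r/t \rceil)n$; hence $f(n,r,t+1) \ge (r - \lceil r/t \rceil)n$. -/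
open scoped Classical

/-- `f n r c` : the largest minimum degree among `r`-partite graphs with parts of
size `n` containing no copy of `K_c`. -/
noncomputable def f (n r c : ℕ) : ℕ :=
  sSup {d | ∃ G : SimpleGraph (Fin r × Fin n),
    IsPartite G ∧ G.CliqueFree c ∧ G.minDegree = d}

/-!
Blow up the Turán graph `T(r, t)`: the vertex `(i, x)` is joined to `(j, y)` iff
`i ≢ j (mod t)`. A clique injects into the residues mod `t`, so there is no `K_{t+1}`, and a
vertex misses only the parts in its own residue class, of which there are at most `⌈r/t⌉`.
-/

open Finset Fintype

namespace SimpleGraph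

variable {α β V : Type*}

theorem CliqueFree.of_hom {G : SimpleGraph α} {H : SimpleGraph β} {k : ℕ} (φ : G →g H)
    (h : H.CliqueFree k) : G.CliqueFree k := by
  rw [cliqueFree_iff] at h ⊢
  exact ⟨fun c => h.false ⟨φ.comp c.toHom, Hom.injective_of_top_hom _⟩⟩

theorem minDegree_le_card_s2 [Fintype V] (G : SimpleGraph V) [DecidableRel G.Adj] :
    G.minDegree ≤ card V := by
  cases isEmpty_or_nonempty V
  · simp
  · exact G.minDegree_lt_card.le

section BlowUp

variable [Fintype α] [Fintype β] (G : SimpleGraph α) [DecidableRel G.Adj]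

theorem degree_comap_fst (v : α × β) :
    (G.comap Prod.fst).degree v = G.degree v.1 * card β := by
  have : (G.comap Prod.fst).neighborFinset v = G.neighborFinset v.1 ×ˢ univ := by
    ext w
    simp
  rw [← card_neighborFinset_eq_degree, this, card_product, card_neighborFinset_eq_degree,
    card_univ]

theorem minDegree_comap_fst :
    (G.comap (Prod.fst : α × β → α)).minDegree = G.minDegree * card β := by
  rcases isEmpty_or_nonempty α with hα | hα
  · simp
  rcases isEmpty_or_nonempty β with hβ | hβ
  · simp
  obtain ⟨a, ha⟩ := G.exists_minimal_degree_vertex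
  refine le_antisymm ?_ (le_minDegree_of_forall_le_degree _ _ fun v => ?_)
  · calc _ ≤ _ := minDegree_le_degree _ (a, Classical.arbitrary β)
      _ = _ := by rw [degree_comap_fst, ha]
  · rw [degree_comap_fst]
    exact Nat.mul_le_mul_right _ (G.minDegree_le_degree v.1)

end BlowUp

theorem card_filter_mod_eq_le_ceilDiv {r t : ℕ} (ht : 0 < t) (a : ℕ) :
    #{i : Fin r | i % t = a} ≤ r ⌈/⌉ t := by
  rw [← card_range (r ⌈/⌉ t)]
  refine card_le_card_of_injOn (fun i : Fin r => i / t) (fun i _ => ?_) (fun i hi j hj hij => ?_)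
  · rw [coe_range, Set.mem_Iio, ← not_le, ceilDiv_le_iff_le_mul ht, not_le]
    exact (Nat.mul_div_le i t).trans_lt i.isLt
  · simp only [coe_filter, mem_univ, true_and, Set.mem_ofPred_eq] at hi hj
    rw [Fin.ext_iff, ← Nat.div_add_mod i t, ← Nat.div_add_mod j t, hi, hj,
      show i / t = j / t from hij]

theorem sub_ceilDiv_le_degree_turanGraph {r t : ℕ} (ht : 0 < t) (v : Fin r) :
    r - r ⌈/⌉ t ≤ (turanGraph r t).degree v := by
  have hdeg : (turanGraph r t).degree v = #{w : Fin r | ¬w % t = v % t} := by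
    rw [← card_neighborFinset_eq_degree]
    congr 1
    ext w
    simp [turanGraph_adj, eq_comm]
  have hsplit := card_filter_add_card_filter_not (s := univ) (fun w : Fin r => w % t = v % t)
  have hclass := card_filter_mod_eq_le_ceilDiv (r := r) ht (v % t)
  rw [card_univ, Fintype.card_fin] at hsplit
  omega

theorem sub_ceilDiv_le_minDegree_turanGraph {r t : ℕ} (ht : 0 < t) :
    r - r ⌈/⌉ t ≤ (turanGraph r t).minDegree := by
  rcases Nat.eq_zero_or_pos r with rfl | hr
  · simp
  · have : Nonempty (Fin r) := Fin.pos_iff_nonempty.mp hr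
    exact le_minDegree_of_forall_le_degree _ _ (sub_ceilDiv_le_degree_turanGraph ht)

end SimpleGraph

theorem isPartite_comap_fst {r n : ℕ} (H : SimpleGraph (Fin r)) :
    IsPartite (H.comap (Prod.fst : Fin r × Fin n → Fin r)) :=
  fun _ _ h => H.ne_of_adj h

theorem minDegree_le_f {n r c : ℕ} {G : SimpleGraph (Fin r × Fin n)} [DecidableRel G.Adj]
    (hG : IsPartite G) (hc : G.CliqueFree c) : G.minDegree ≤ f n r c := by
  rw [f]
  refine le_csSup_of_le ⟨r * n, ?_⟩ ⟨G, hG, hc, rfl⟩ (le_of_eq (by congr!))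
  rintro _ ⟨H, -, -, rfl⟩
  simpa using H.minDegree_le_card_s2

theorem stmt2_general (n r t : ℕ) (ht : 2 ≤ t) :
    (∃ G : SimpleGraph (Fin r × Fin n), IsPartite G ∧ G.CliqueFree (t + 1) ∧
      (r - r ⌈/⌉ t) * n ≤ G.minDegree) ∧
    (r - r ⌈/⌉ t) * n ≤ f n r (t + 1) := by
  have ht0 : 0 < t := by omega
  let G := (SimpleGraph.turanGraph r t).comap (Prod.fst : Fin r × Fin n → Fin r)
  have hpart : IsPartite G := isPartite_comap_fst _
  have hfree : G.CliqueFree (t + 1) :=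
    (SimpleGraph.turanGraph_cliqueFree ht0).of_hom (SimpleGraph.Hom.comap _ _)
  have hmin : (r - r ⌈/⌉ t) * n ≤ G.minDegree := by
    convert Nat.mul_le_mul_right n (SimpleGraph.sub_ceilDiv_le_minDegree_turanGraph ht0)
    simpa using SimpleGraph.minDegree_comap_fst (β := Fin n) (SimpleGraph.turanGraph r t)
  exact ⟨⟨G, hpart, hfree, by convert hmin⟩, hmin.trans (minDegree_le_f hpart hfree)⟩

/-- The `n`-blow-up of the Turán graph `T_t(r)`, viewed as an `r`-partite graph with parts
of size `n`, is `K_{t+1}`-free with minimum degree at least `(r - ⌈r/t⌉)·n`; hence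
`f(n,r,t+1) ≥ (r - ⌈r/t⌉)·n`. -/
theorem stmt2 (n r t : ℕ) (hn : 1 ≤ n) (ht : 2 ≤ t) (htr : t < r) :
    (∃ G : SimpleGraph (Fin r × Fin n), IsPartite G ∧ G.CliqueFree (t + 1) ∧
      (r - r ⌈/⌉ t) * n ≤ G.minDegree) ∧
    (r - r ⌈/⌉ t) * n ≤ f n r (t + 1) :=
  stmt2_general n r t ht
end

section
/- If $t$ divides $r$, then $f(n,r,t+1) = (r - r/t)n$. -/
open scoped Classical

/-!
Upper bound (Turán-type, ignoring the parts): in a graph with `N` vertices and minimum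
degree `δ`, a vertex fails to be adjacent to at most `N - δ` vertices, itself included, so
while `k (N - δ) < N` every `k`-clique has a common neighbour. A `K_{t+1}`-free graph
therefore has `N ≤ t (N - δ)`, i.e. `δ ≤ N - N / t`.

Lower bound: sort the `r` parts into `t` classes by their index mod `t` and join two vertices
exactly when their classes differ. Colouring by the class shows the graph is `K_{t+1}`-free,
and when `t ∣ r` every class consists of `r / t` parts, so the graph is
`(r - r / t) n`-regular.
-/

open Finset SimpleGraph

namespace SimpleGraph

lemma cliqueFree_comap_top {V W : Type*} [Fintype W] (c : V → W) :
    ((⊤ : SimpleGraph W).comap c).CliqueFree (Fintype.card W + 1) :=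
  (Coloring.colorable ⟨c, id⟩).cliqueFree (Nat.lt_succ_self _)

lemma degree_comap_top {V W : Type*} [Fintype V] [DecidableEq W] (c : V → W)
    [DecidableRel ((⊤ : SimpleGraph W).comap c).Adj] (v : V) :
    ((⊤ : SimpleGraph W).comap c).degree v = Fintype.card V - #{w | c w = c v} := by
  rw [← card_neighborFinset_eq_degree, ← card_univ, ← card_sdiff_of_subset (filter_subset _ _),
    ← filter_not]
  congr 1
  ext w
  simp [eq_comm]

variable {V : Type*} [Fintype V] {G : SimpleGraph V} [DecidableRel G.Adj]

lemma exists_forall_adj_of_card_mul_lt (s : Finset V)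
    (h : #s * (Fintype.card V - G.minDegree) < Fintype.card V) : ∃ w, ∀ v ∈ s, G.Adj v w := by
  have hcard : #(s.biUnion fun v => (G.neighborFinset v)ᶜ) < #(univ : Finset V) :=
    calc _ ≤ ∑ v ∈ s, #(G.neighborFinset v)ᶜ := card_biUnion_le
      _ ≤ #s * (Fintype.card V - G.minDegree) := by
        refine sum_le_card_nsmul _ _ _ fun v _ => ?_
        rw [card_compl, card_neighborFinset_eq_degree]
        exact Nat.sub_le_sub_left (G.minDegree_le_degree v) _
      _ < _ := h
  obtain ⟨w, -, hw⟩ := exists_mem_notMem_of_card_lt_card hcard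
  exact ⟨w, by simpa using hw⟩

lemma exists_isNClique_of_mul_lt {k : ℕ}
    (h : k * (Fintype.card V - G.minDegree) < Fintype.card V) : ∃ s, G.IsNClique (k + 1) s := by
  induction k with
  | zero =>
    obtain ⟨v⟩ : Nonempty V := Fintype.card_pos_iff.mp (by simpa using h)
    exact ⟨{v}, isNClique_singleton.mpr rfl⟩
  | succ k ih =>
    obtain ⟨s, hs⟩ := ih ((Nat.mul_le_mul_right _ k.le_succ).trans_lt h)
    obtain ⟨w, hw⟩ := exists_forall_adj_of_card_mul_lt s (hs.2 ▸ h)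
    exact ⟨insert w s, hs.insert fun v hv => (hw v hv).symm⟩

theorem CliqueFree.minDegree_le_card_sub_card_div {k : ℕ} (h : G.CliqueFree (k + 1)) :
    G.minDegree ≤ Fintype.card V - Fintype.card V / k := by
  have hcard : Fintype.card V / k ≤ Fintype.card V - G.minDegree := by
    refine Nat.div_le_of_le_mul (not_lt.mp fun hlt => ?_)
    obtain ⟨s, hs⟩ := exists_isNClique_of_mul_lt hlt
    exact h s hs
  have hδ : G.minDegree ≤ Fintype.card V := by
    cases isEmpty_or_nonempty V
    · simp [minDegree_of_subsingleton]
    · exact G.minDegree_lt_card.le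
  omega

end SimpleGraph

lemma Fin.card_filter_modEq {r t : ℕ} (ht : 0 < t) (hdvd : t ∣ r) (a : ℕ) :
    #{j : Fin r | (j : ℕ) ≡ a [MOD t]} = r / t := by
  have hcount : #{j : Fin r | (j : ℕ) ≡ a [MOD t]} = Nat.count (· ≡ a [MOD t]) r := by
    rw [Nat.count_eq_card_filter_range, ← Nat.Iio_eq_range, ← Fin.map_valEmbedding_univ,
      filter_map, card_map]
    rfl
  simp [hcount, Nat.count_modEq_card _ ht, Nat.mod_eq_zero_of_dvd hdvd]

def residueGraph (r n t : ℕ) [NeZero t] : SimpleGraph (Fin r × Fin n) :=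
  (⊤ : SimpleGraph (Fin t)).comap fun v => Fin.ofNat t v.1

namespace residueGraph

variable {r n t : ℕ} [NeZero t]

lemma isPartite : IsPartite (residueGraph r n t) :=
  fun _ _ hadj hfst => hadj (congrArg (fun j : Fin r => Fin.ofNat t j) hfst)

lemma cliqueFree : (residueGraph r n t).CliqueFree (t + 1) := by
  have h := cliqueFree_comap_top (fun v : Fin r × Fin n => Fin.ofNat t v.1)
  rwa [Fintype.card_fin] at h

lemma isRegularOfDegree (hdvd : t ∣ r) :
    (residueGraph r n t).IsRegularOfDegree ((r - r / t) * n) := by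
  intro v
  have hfibre : #{w : Fin r × Fin n | Fin.ofNat t w.1 = Fin.ofNat t v.1} = r / t * n := by
    rw [← univ_product_univ,
      filter_product_left (fun j : Fin r => Fin.ofNat t j = Fin.ofNat t v.1), card_product,
      card_univ, Fintype.card_fin]
    congr 1
    convert Fin.card_filter_modEq (NeZero.pos t) hdvd v.1 using 3
    simp [Fin.ext_iff, Nat.ModEq]
  rw [residueGraph, degree_comap_top, hfibre, Fintype.card_prod, Fintype.card_fin,
    Fintype.card_fin, Nat.sub_mul]

end residueGraph

/-- If `t` divides `r`, then `f(n,r,t+1) = (r - r/t)·n`. -/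
theorem stmt3 (n r t : ℕ) (hn : 1 ≤ n) (ht : 2 ≤ t) (htr : t < r) (hdvd : t ∣ r) :
    f n r (t + 1) = (r - r / t) * n := by
  have : NeZero t := ⟨by omega⟩
  have : Nonempty (Fin r × Fin n) := ⟨(⟨0, by omega⟩, ⟨0, by omega⟩)⟩
  refine IsGreatest.csSup_eq ⟨⟨residueGraph r n t, residueGraph.isPartite, residueGraph.cliqueFree,
    (residueGraph.isRegularOfDegree hdvd).minDegree_eq⟩, ?_⟩
  rintro _ ⟨G, -, hG, rfl⟩
  calc G.minDegree ≤ r * n - r * n / t := by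
        simpa using hG.minDegree_le_card_sub_card_div
    _ = (r - r / t) * n := by rw [← Nat.div_mul_right_comm hdvd, Nat.sub_mul]
end

section
/- Let $r > t \ge 2$ and $0 \le a \le t-1$ with $r \equiv -a \pmod t$. If $r \ge a(3t-1)$, then $f(n,r,t+1) = \delta(n,r,t)$ for all $n \ge 1$. -/
open scoped Classical

/-- `deltaP n r t` : the largest minimum degree among `r`-partite graphs with parts
of size `n` and chromatic number at most `t`. -/
noncomputable def deltaP (n r t : ℕ) : ℕ :=
  sSup {d | ∃ G : SimpleGraph (Fin r × Fin n),
    IsPartite G ∧ G.chromaticNumber ≤ (t : ℕ∞) ∧ G.minDegree = d}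

/-!
Every graph with chromatic number at most `t` is `K_{t+1}`-free, so `δ(n,r,t) ≤ f(n,r,t+1)`.
Conversely, write `r + a = tQ` and merge the `r` parts into `t` groups of at most `Q` parts each;
joining all pairs of vertices in different groups gives an `r`-partite, `t`-colourable graph of
minimum degree at least `(r - Q)n`. The condition `r ≥ a(3t-1)` is exactly
`(r - Q)n ≥ (3t-4)/(3t-1) · rn`, so a `K_{t+1}`-free graph either has minimum degree at most that
of the merged graph, or lies above the Andrásfai–Erdős–Sós threshold and is `t`-colourable.
-/

open Finset SimpleGraph Function

section
variable {V : Type*} [Fintype V]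

theorem bddAbove_of_subset_range_minDegree {S : Set ℕ}
    (hS : S ⊆ Set.range fun G : SimpleGraph V => G.minDegree) : BddAbove S :=
  ((Set.finite_range _).subset hS).bddAbove

theorem card_fiber_le_of_injective {W β : Type*} [Fintype β] [DecidableEq W]
    {e : V → W × β} (he : Injective e) (w : W) :
    #{v | (e v).1 = w} ≤ Fintype.card β :=
  card_le_card_of_injOn (fun v => (e v).2) (fun _ _ => mem_coe.2 (mem_univ _))
    fun _ hv _ hu h => he (Prod.ext ((mem_filter.1 hv).2.trans (mem_filter.1 hu).2.symm) h)

theorem card_le_minDegree_comap_top_add {W β : Type*} [Fintype β] {e : V → W × β}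
    (he : Injective e) :
    Fintype.card V ≤ ((⊤ : SimpleGraph W).comap (Prod.fst ∘ e)).minDegree + Fintype.card β := by
  rcases isEmpty_or_nonempty V with hV | hV
  · simp
  set H := (⊤ : SimpleGraph W).comap (Prod.fst ∘ e)
  obtain ⟨v, hv⟩ := H.exists_minimal_degree_vertex
  have hdeg : H.degree v + #{u | (e u).1 = (e v).1} = Fintype.card V := by
    have hnbr : H.neighborFinset v = ({u | (e u).1 = (e v).1} : Finset V)ᶜ := by
      ext u
      simp [H, eq_comm]
    rw [← card_neighborFinset_eq_degree, hnbr, card_compl_add_card]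
  rw [hv]
  have := card_fiber_le_of_injective he (e v).1
  omega

end

theorem threshold_le_sub_mul {K : Type*} [Field K] [LinearOrder K] [IsStrictOrderedRing K]
    {t r a Q n : K} (ht : 1 ≤ t) (hQ : t * Q = r + a) (hra : a * (3 * t - 1) ≤ r)
    (hn : 0 ≤ n) : (3 * t - 4) / (3 * t - 1) * (r * n) ≤ (r - Q) * n := by
  have hslack : 0 ≤ 3 * r - Q * (3 * t - 1) := by
    refine nonneg_of_mul_nonneg_right ?_ (by linarith : (0 : K) < t)
    linear_combination (3 * t - 1) * hQ + hra
  rw [div_mul_eq_mul_div, div_le_iff₀ (by linarith)]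
  nlinarith [mul_nonneg hn hslack]

theorem deltaP_le_f (n r t : ℕ) : deltaP n r t ≤ f n r (t + 1) :=
  csSup_le_csSup' (bddAbove_of_subset_range_minDegree fun _ ⟨G, _, _, hG⟩ => ⟨G, hG⟩)
    fun _ ⟨G, hG, hχ, hd⟩ =>
      ⟨G, hG, (chromaticNumber_le_iff_colorable.1 hχ).cliqueFree t.lt_succ_self, hd⟩

theorem f_le_deltaP_of_threshold {n r t : ℕ} {θ : ℚ}
    (hAES : ∀ G : SimpleGraph (Fin r × Fin n), G.CliqueFree (t + 1) →
      θ < G.minDegree → G.chromaticNumber ≤ (t : ℕ∞))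
    {H : SimpleGraph (Fin r × Fin n)} (hH : IsPartite H) (hHχ : H.chromaticNumber ≤ (t : ℕ∞))
    (hθ : θ ≤ H.minDegree) : f n r (t + 1) ≤ deltaP n r t := by
  have hbdd : BddAbove {d | ∃ G : SimpleGraph (Fin r × Fin n),
      IsPartite G ∧ G.chromaticNumber ≤ (t : ℕ∞) ∧ G.minDegree = d} :=
    bddAbove_of_subset_range_minDegree fun _ ⟨G, _, _, hG⟩ => ⟨G, hG⟩
  refine csSup_le' fun d ⟨G, hG, hfree, hd⟩ => ?_
  by_cases hlarge : θ < G.minDegree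
  · exact le_csSup hbdd ⟨G, hG, hAES G hfree hlarge, hd⟩
  · have hle : G.minDegree ≤ H.minDegree := by exact_mod_cast (not_lt.1 hlarge).trans hθ
    exact hd ▸ hle.trans (le_csSup hbdd ⟨H, hH, hHχ, rfl⟩)

section GroupedComplete
variable {r t Q : ℕ} (n : ℕ) (h : r ≤ t * Q)

-- `i ↦ (i / Q, i % Q)`: the `r` parts are split into `t` groups of at most `Q` consecutive parts.
def groupOf (i : Fin r) : Fin t × Fin Q :=
  finProdFinEquiv.symm (Fin.castLE h i)

def groupedComplete : SimpleGraph (Fin r × Fin n) :=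
  (⊤ : SimpleGraph (Fin t)).comap fun v => (groupOf h v.1).1

theorem groupOf_injective : Injective (groupOf h) :=
  finProdFinEquiv.symm.injective.comp (Fin.castLE_injective h)

theorem isPartite_groupedComplete : IsPartite (groupedComplete n h) :=
  fun _ _ hadj hpart => hadj (congrArg (fun i => (groupOf h i).1) hpart)

theorem chromaticNumber_groupedComplete_le : (groupedComplete n h).chromaticNumber ≤ t :=
  Colorable.chromaticNumber_le ⟨Hom.comap _ _⟩

theorem le_minDegree_groupedComplete_add :
    r * n ≤ (groupedComplete n h).minDegree + Q * n := by
  have he : Injective fun v : Fin r × Fin n => ((groupOf h v.1).1, (groupOf h v.1).2, v.2) :=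
    fun v w hvw => by
      simp only [Prod.mk.injEq] at hvw
      exact Prod.ext (groupOf_injective h (Prod.ext hvw.1 hvw.2.1)) hvw.2.2
  convert card_le_minDegree_comap_top_add he using 3
  · simp
  · rfl
  · simp

end GroupedComplete

theorem stmt8_general (n r t a : ℕ) (ht : 2 ≤ t)
    (hmod : t ∣ (r + a)) (hra : a * (3 * t - 1) ≤ r)
    (hAES : ∀ G : SimpleGraph (Fin r × Fin n), G.CliqueFree (t + 1) →
      ((3 * t - 4 : ℚ) / (3 * t - 1)) * (r * n) < G.minDegree →
      G.chromaticNumber ≤ (t : ℕ∞)) :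
    f n r (t + 1) = deltaP n r t := by
  obtain ⟨Q, hQ⟩ := hmod
  have hrQ : r ≤ t * Q := hQ ▸ r.le_add_right a
  refine le_antisymm (f_le_deltaP_of_threshold hAES (isPartite_groupedComplete n hrQ)
    (chromaticNumber_groupedComplete_le n hrQ) ?_) (deltaP_le_f n r t)
  have hra' : (a : ℚ) * (3 * t - 1) ≤ r := by
    have h3t : 1 ≤ 3 * t := by omega
    exact_mod_cast hra
  have hdeg : (r * n : ℚ) ≤ (groupedComplete n hrQ).minDegree + Q * n := by
    exact_mod_cast le_minDegree_groupedComplete_add n hrQ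
  calc (3 * t - 4 : ℚ) / (3 * t - 1) * (r * n)
      ≤ (r - Q) * n := threshold_le_sub_mul (by exact_mod_cast ht.trans' one_le_two)
        (by exact_mod_cast hQ.symm) hra' n.cast_nonneg
    _ ≤ (groupedComplete n hrQ).minDegree := by linarith

/-- Let `r > t ≥ 2` and `0 ≤ a ≤ t-1` with `r ≡ -a (mod t)`. If `r ≥ a(3t-1)`,
then (assuming the Andrásfai–Erdős–Sós theorem) `f(n,r,t+1) = δ(n,r,t)`. -/
theorem stmt8 (n r t a : ℕ) (hn : 1 ≤ n) (ht : 2 ≤ t) (htr : t < r)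
    (ha : a ≤ t - 1) (hmod : t ∣ (r + a)) (hra : a * (3 * t - 1) ≤ r)
    (hAES : ∀ G : SimpleGraph (Fin r × Fin n), G.CliqueFree (t + 1) →
      ((3 * t - 4 : ℚ) / (3 * t - 1)) * (r * n) < G.minDegree →
      G.chromaticNumber ≤ (t : ℕ∞)) :
    f n r (t + 1) = deltaP n r t :=
  stmt8_general n r t a ht hmod hra hAES
end

section
/- Let $r > t \ge 3$ with $r = mt - a$ where $2 \le m < a < t$. Then $\delta(n,r,t) \ge (r-1)n - (m-1)\lceil \frac{(m(t-1-a+m)-1)n}{m(t-a+m)-2} \rceil$. -/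
/-!
Write `a = m + f` and `t = s + 1 + f`, so that `r = m s + (m - 1) f`. Colour the vertices and join
two of them iff they lie in different parts and get different colours: the graph is `r`-partite,
the colouring is proper, and a vertex misses exactly the vertices of other parts sharing its
colour. The first `m s` parts form `s` blocks of `m` parts; in each of them the first `q` vertices
take the colour of their block and all other vertices the common colour `s`. The remaining parts
form `f` blocks of `m - 1` parts, each block monochromatic in a colour of its own, so `t` colours
are used. A vertex then shares its colour with at most `(m - 1) q`, `(m s - 1)(n - q)` or
`(m - 2) n` vertices of other parts, and `q = ⌈(m s - 1) n / (m s + m - 2)⌉` is the least `q`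
making the second bound at most the first; the third is then smaller as well because `s ≥ m`.
-/

open scoped Classical

open Finset

lemma minDegree_le_deltaP {n r t : ℕ} {G : SimpleGraph (Fin r × Fin n)} (hG : IsPartite G)
    (hχ : G.chromaticNumber ≤ t) : G.minDegree ≤ deltaP n r t := by
  refine le_csSup ⟨r * n, ?_⟩ ⟨G, hG, hχ, rfl⟩
  rintro _ ⟨H, -, -, rfl⟩
  calc H.minDegree ≤ (⊤ : SimpleGraph (Fin r × Fin n)).minDegree :=
        H.minDegree_le_minDegree le_top
    _ ≤ r * n := by simp

section Counting

variable {r n : ℕ}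

lemma card_filter_le_of_mem_Ico {p : Fin r → Prop} [DecidablePred p] {L k : ℕ}
    (hp : ∀ j, p j → L ≤ (j : ℕ) ∧ (j : ℕ) < L + k) : #{j | p j} ≤ k := by
  simpa using card_le_card_of_injOn (fun j : Fin r => (j : ℕ)) (t := Ico L (L + k))
    (fun j hj => by simpa using hp j (by simpa using hj)) Fin.val_injective.injOn

lemma card_filter_ne_le_of_mem_Ico {p : Fin r → Prop} [DecidablePred p] {L k : ℕ} {i : Fin r}
    (hi : p i) (hp : ∀ j, p j → L ≤ (j : ℕ) ∧ (j : ℕ) < L + k) : #{j | j ≠ i ∧ p j} ≤ k - 1 := by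
  have herase : ({j | j ≠ i ∧ p j} : Finset (Fin r)) = ({j | p j} : Finset (Fin r)).erase i := by
    ext; simp
  rw [herase, card_erase_of_mem (by simpa using hi)]
  exact Nat.sub_le_sub_right (card_filter_le_of_mem_Ico hp) 1

lemma card_le_card_mul_card_of_mem {S : Finset (Fin r × Fin n)} {P : Finset (Fin r)}
    {Y : Finset (Fin n)} (h : ∀ w ∈ S, w.1 ∈ P ∧ w.2 ∈ Y) : #S ≤ #P * #Y :=
  card_product P Y ▸ card_le_card fun w hw => mem_product.2 (h w hw)

lemma card_filter_fst_ne (i : Fin r) : #{w : Fin r × Fin n | w.1 ≠ i} = (r - 1) * n := by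
  have : ({w | w.1 ≠ i} : Finset (Fin r × Fin n)) = univ.erase i ×ˢ univ := by ext; simp
  simp [this, card_erase_of_mem]

end Counting

section ColourGraph

variable {r n : ℕ}

def colourGraph (φ : Fin r × Fin n → ℕ) : SimpleGraph (Fin r × Fin n) where
  Adj v w := v.1 ≠ w.1 ∧ φ v ≠ φ w
  symm := ⟨fun _ _ h => ⟨h.1.symm, h.2.symm⟩⟩
  loopless := ⟨fun _ h => h.1 rfl⟩

@[simp]
lemma colourGraph_adj {φ : Fin r × Fin n → ℕ} {v w : Fin r × Fin n} :
    (colourGraph φ).Adj v w ↔ v.1 ≠ w.1 ∧ φ v ≠ φ w := Iff.rfl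

lemma colourGraph_isPartite (φ : Fin r × Fin n → ℕ) : IsPartite (colourGraph φ) :=
  fun _ _ h => h.1

lemma chromaticNumber_colourGraph_le {φ : Fin r × Fin n → ℕ} {t : ℕ} (hφ : ∀ v, φ v < t) :
    (colourGraph φ).chromaticNumber ≤ t :=
  SimpleGraph.chromaticNumber_le_iff_colorable.2 <|
    (SimpleGraph.colorable_iff_exists_bdd_nat_coloring t).2 ⟨⟨φ, fun h => h.2⟩, hφ⟩

def sameColourElsewhere (φ : Fin r × Fin n → ℕ) (v : Fin r × Fin n) :
    Finset (Fin r × Fin n) :=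
  {w | w.1 ≠ v.1 ∧ φ w = φ v}

@[simp]
lemma mem_sameColourElsewhere {φ : Fin r × Fin n → ℕ} {v w : Fin r × Fin n} :
    w ∈ sameColourElsewhere φ v ↔ w.1 ≠ v.1 ∧ φ w = φ v := by
  simp [sameColourElsewhere]

lemma degree_colourGraph_add_card_sameColourElsewhere (φ : Fin r × Fin n → ℕ)
    (v : Fin r × Fin n) :
    (colourGraph φ).degree v + #(sameColourElsewhere φ v) = (r - 1) * n := by
  have hsplit := card_filter_add_card_filter_not (s := {w | w.1 ≠ v.1}) (fun w => φ w = φ v)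
  rw [filter_filter, filter_filter, card_filter_fst_ne] at hsplit
  rw [← hsplit, add_comm, SimpleGraph.degree, SimpleGraph.neighborFinset_eq_filter]
  congr 3
  ext w
  simp only [colourGraph_adj, ne_comm]

lemma sub_le_minDegree_colourGraph [Nonempty (Fin r × Fin n)] {φ : Fin r × Fin n → ℕ} {B : ℕ}
    (hB : ∀ v, #(sameColourElsewhere φ v) ≤ B) : (r - 1) * n - B ≤ (colourGraph φ).minDegree :=
  SimpleGraph.le_minDegree_of_forall_le_degree _ _ fun v => by
    have := degree_colourGraph_add_card_sameColourElsewhere φ v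
    have := hB v
    omega

end ColourGraph

section BlockColouring

variable {r n : ℕ}

def blockColouring (m s q : ℕ) (v : Fin r × Fin n) : ℕ :=
  if (v.1 : ℕ) < m * s then (if (v.2 : ℕ) < q then v.1 / m else s)
  else s + 1 + (v.1 - m * s) / (m - 1)

variable {m s q : ℕ}

lemma blockColouring_lt {f : ℕ} (hr : r ≤ m * s + (m - 1) * f) (v : Fin r × Fin n) :
    blockColouring m s q v < s + 1 + f := by
  unfold blockColouring
  split_ifs with h1 h2
  · have := Nat.div_lt_of_lt_mul h1
    omega
  · omega
  · have := Nat.div_lt_of_lt_mul (m := v.1 - m * s) (n := m - 1) (k := f) (by omega)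
    omega

lemma card_sameColourElsewhere_of_lt_of_lt (hm : 0 < m) {v : Fin r × Fin n}
    (h1 : (v.1 : ℕ) < m * s) (h2 : (v.2 : ℕ) < q) :
    #(sameColourElsewhere (blockColouring m s q) v) ≤ (m - 1) * q := by
  have hv : (v.1 : ℕ) / m < s := Nat.div_lt_of_lt_mul h1
  refine (card_le_card_mul_card_of_mem (P := {j | j ≠ v.1 ∧ (j : ℕ) / m = v.1 / m})
    (Y := {y | (y : ℕ) < q}) ?_).trans (Nat.mul_le_mul ?_ ?_)
  · intro w hw
    obtain ⟨hne, hw⟩ := mem_sameColourElsewhere.1 hw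
    simp only [blockColouring, h1, h2, if_true] at hw
    split_ifs at hw with hw1 hw2
    · simp [hne, hw, hw2]
    · omega
    · -- as an atom, the quotient is not known to `omega` to be nonnegative
      generalize (w.1 - m * s) / (m - 1) = d at hw
      omega
  · refine card_filter_ne_le_of_mem_Ico (L := v.1 / m * m) (k := m) rfl fun j hj => ?_
    rw [← hj]
    exact ⟨Nat.div_mul_le_self _ _, Nat.lt_div_mul_add hm⟩
  · exact card_filter_le_of_mem_Ico (L := 0) fun y hy => ⟨Nat.zero_le _, by simpa using hy⟩

lemma card_sameColourElsewhere_of_lt_of_not_lt {v : Fin r × Fin n} (h1 : (v.1 : ℕ) < m * s)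
    (h2 : ¬ (v.2 : ℕ) < q) :
    #(sameColourElsewhere (blockColouring m s q) v) ≤ (m * s - 1) * (n - q) := by
  refine (card_le_card_mul_card_of_mem (P := {j | j ≠ v.1 ∧ (j : ℕ) < m * s})
    (Y := {y | ¬ (y : ℕ) < q}) ?_).trans (Nat.mul_le_mul ?_ ?_)
  · intro w hw
    obtain ⟨hne, hw⟩ := mem_sameColourElsewhere.1 hw
    simp only [blockColouring, h1, h2, if_true, if_false] at hw
    split_ifs at hw with hw1 hw2
    · exact absurd hw (Nat.div_lt_of_lt_mul hw1).ne
    · simp [hne, hw1, not_lt.1 hw2]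
    · generalize (w.1 - m * s) / (m - 1) = d at hw
      omega
  · exact card_filter_ne_le_of_mem_Ico (L := 0) h1 fun j hj => ⟨Nat.zero_le _, by simpa using hj⟩
  · exact card_filter_le_of_mem_Ico (L := q) fun y hy => by omega

lemma card_sameColourElsewhere_of_not_lt (hm : 2 ≤ m) {v : Fin r × Fin n}
    (h1 : ¬ (v.1 : ℕ) < m * s) :
    #(sameColourElsewhere (blockColouring m s q) v) ≤ (m - 2) * n := by
  set D := ((v.1 : ℕ) - m * s) / (m - 1) with hD
  clear_value D
  refine (card_le_card_mul_card_of_mem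
    (P := {j | j ≠ v.1 ∧ (m * s ≤ (j : ℕ) ∧ ((j : ℕ) - m * s) / (m - 1) = D)})
    (Y := univ) ?_).trans (Nat.mul_le_mul ?_ (card_univ.trans (Fintype.card_fin n)).le)
  · intro w hw
    obtain ⟨hne, hw⟩ := mem_sameColourElsewhere.1 hw
    simp only [blockColouring, h1, if_false] at hw
    split_ifs at hw with hw1 hw2
    · have := Nat.div_lt_of_lt_mul hw1
      omega
    · omega
    · simpa [hne, hD, not_lt.1 hw1] using Nat.add_left_cancel hw
  · refine card_filter_ne_le_of_mem_Ico (L := m * s + D * (m - 1)) (k := m - 1) ⟨by omega, hD.symm⟩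
      fun j ⟨hj, hjD⟩ => ?_
    have := Nat.div_mul_le_self ((j : ℕ) - m * s) (m - 1)
    have := Nat.lt_div_mul_add (a := (j : ℕ) - m * s) (b := m - 1) (by omega)
    rw [hjD] at *
    omega

lemma card_sameColourElsewhere_blockColouring_le (hm : 2 ≤ m) {B : ℕ} (hA : (m - 1) * q ≤ B)
    (hS : (m * s - 1) * (n - q) ≤ B) (hF : (m - 2) * n ≤ B) (v : Fin r × Fin n) :
    #(sameColourElsewhere (blockColouring m s q) v) ≤ B := by
  by_cases h1 : (v.1 : ℕ) < m * s
  · by_cases h2 : (v.2 : ℕ) < q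
    · exact (card_sameColourElsewhere_of_lt_of_lt (by omega) h1 h2).trans hA
    · exact (card_sameColourElsewhere_of_lt_of_not_lt h1 h2).trans hS
  · exact (card_sameColourElsewhere_of_not_lt hm h1).trans hF

end BlockColouring

lemma mul_sub_le_of_le_add_mul {c k n q : ℕ} (h : c * n ≤ (c + k) * q) :
    c * (n - q) ≤ k * q := by
  rw [Nat.mul_sub, add_mul] at *
  omega

lemma sub_two_mul_le_sub_one_mul {m s n q : ℕ} (hm : 2 ≤ m) (hs : m ≤ s)
    (h : (m * s - 1) * n ≤ (m * s - 1 + (m - 1)) * q) : (m - 2) * n ≤ (m - 1) * q := by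
  have hms : 2 * 2 ≤ m * s := Nat.mul_le_mul hm (hm.trans hs)
  have key : (m - 2) * (m * s - 1 + (m - 1)) ≤ (m - 1) * (m * s - 1) := by
    zify [hm, (by omega : 1 ≤ m * s), (by omega : 1 ≤ m)]
    nlinarith
  refine Nat.le_of_mul_le_mul_left ?_ (by omega : 0 < m * s - 1 + (m - 1))
  calc (m * s - 1 + (m - 1)) * ((m - 2) * n) = (m - 2) * (m * s - 1 + (m - 1)) * n := by ring
    _ ≤ (m - 1) * (m * s - 1) * n := Nat.mul_le_mul_right n key
    _ = (m - 1) * ((m * s - 1) * n) := by ring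
    _ ≤ (m - 1) * ((m * s - 1 + (m - 1)) * q) := Nat.mul_le_mul_left _ h
    _ = (m * s - 1 + (m - 1)) * ((m - 1) * q) := by ring

theorem stmt11_general (n r m t a : ℕ) (hn : 1 ≤ n)
    (hm : 2 ≤ m) (hma : m < a) (hat : a < t) (hr : r = m * t - a) :
    (r - 1) * n - (m - 1) * (((m * (t - 1 - a + m) - 1) * n) ⌈/⌉ (m * (t - a + m) - 2))
      ≤ deltaP n r t := by
  obtain ⟨f, rfl⟩ : ∃ f, a = m + f := ⟨a - m, by omega⟩
  obtain ⟨s, rfl⟩ : ∃ s, t = s + 1 + f := ⟨t - 1 - f, by omega⟩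
  have hr_blocks : r = m * s + (m - 1) * f := by
    have := Nat.le_mul_of_pos_left f (by omega : 0 < m)
    rw [hr, Nat.sub_one_mul, mul_add, mul_add_one]
    omega
  have hms : m * 2 ≤ m * s := Nat.mul_le_mul_left m (by omega)
  rw [show s + 1 + f - 1 - (m + f) + m = s by omega,
    show m * (s + 1 + f - (m + f) + m) - 2 = m * s - 1 + (m - 1) by
      rw [show s + 1 + f - (m + f) + m = s + 1 by omega, mul_add_one]; omega]
  set q := ((m * s - 1) * n) ⌈/⌉ (m * s - 1 + (m - 1))
  have hq : (m * s - 1) * n ≤ (m * s - 1 + (m - 1)) * q :=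
    le_smul_ceilDiv (a := m * s - 1 + (m - 1)) (by omega)
  have : Nonempty (Fin r × Fin n) := ⟨(⟨0, by omega⟩, ⟨0, hn⟩)⟩
  calc _ ≤ (colourGraph (blockColouring m s q)).minDegree :=
        sub_le_minDegree_colourGraph <| card_sameColourElsewhere_blockColouring_le hm le_rfl
          (mul_sub_le_of_le_add_mul hq) (sub_two_mul_le_sub_one_mul hm (by omega) hq)
    _ ≤ deltaP n r (s + 1 + f) := minDegree_le_deltaP (colourGraph_isPartite _)
        (chromaticNumber_colourGraph_le (blockColouring_lt hr_blocks.le))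

/-- Let `r > t ≥ 3` with `r = mt - a` where `2 ≤ m < a < t`. Then
`δ(n,r,t) ≥ (r-1)n - (m-1)⌈(m(t-1-a+m)-1)n / (m(t-a+m)-2)⌉`. -/
theorem stmt11 (n r m t a : ℕ) (hn : 1 ≤ n) (ht : 3 ≤ t) (htr : t < r)
    (hm : 2 ≤ m) (hma : m < a) (hat : a < t) (hr : r = m * t - a) :
    (r - 1) * n - (m - 1) * (((m * (t - 1 - a + m) - 1) * n) ⌈/⌉ (m * (t - a + m) - 2))
      ≤ deltaP n r t :=
  stmt11_general n r m t a hn hm hma hat hr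
end

section
/- Let $m, t \ge 3$ and $r = mt - 1$. Then $\delta(n,r,t) = (m(t-1)-1)n$, i.e., the maximum minimum degree among $r$-partite graphs with parts of size $n$ and chromatic number at most $t$ equals $(r-m)n$. -/
/-!
Let `C i` be the colour classes of a proper `t`-colouring and `P j` the parts. A vertex of
`C i ∩ P j` has no neighbour in `C i ∪ P j`, so if the minimum degree exceeded `(r - m) n`, then
`#(C i ∪ P j) < m n` whenever `C i` meets `P j`. The slacks `s i = m n - #(C i)` add up to at
most `t m n - r n ≤ n`, while `#(C i ∩ P j) > n - s i` whenever `C i` meets `P j`; two colours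
in one part would need more than `n` of its vertices, so every part is monochromatic. Each colour
class is then a union of fewer than `m` parts, and `t` colours cover at most `t (m - 1) < r`
parts, a contradiction.

Conversely, splitting the `r < m t` parts into `t` blocks of at most `m` consecutive parts and
joining vertices in different blocks gives a `t`-colourable partite graph in which every vertex
misses at most `m n` vertices.
-/

open scoped Classical

open Finset

section Fibers

variable {V ι κ : Type*} [Fintype V]

noncomputable def fiber (f : V → ι) (a : ι) : Finset V := {x | f x = a}

@[simp]
lemma mem_fiber {f : V → ι} {a : ι} {x : V} : x ∈ fiber f a ↔ f x = a := by
  simp [fiber]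

lemma sum_card_fiber [Fintype ι] (f : V → ι) : ∑ a, #(fiber f a) = Fintype.card V :=
  (card_eq_sum_card_fiberwise fun x _ => mem_univ (f x)).symm

lemma card_eq_card_image_mul_of_saturated (p : V → ι) {n : ℕ} (hp : ∀ j, #(fiber p j) = n)
    {s : Finset V} (hs : ∀ x y, p x = p y → x ∈ s → y ∈ s) : #s = #(s.image p) * n := by
  rw [card_eq_sum_card_image p s, ← smul_eq_mul, ← sum_const]
  refine sum_congr rfl fun j hj => ?_
  obtain ⟨x, hx, rfl⟩ := mem_image.mp hj
  rw [← hp (p x)]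
  congr 1
  ext y
  simp only [mem_filter, mem_fiber, and_iff_right_iff_imp]
  exact fun hy => hs x y hy.symm hx

variable [Fintype κ] (p : V → ι) (c : V → κ) {n m : ℕ}

lemma color_eq_of_part_eq (hp : ∀ j, #(fiber p j) = n)
    (hslack : ∑ i, (m * n - #(fiber c i)) ≤ n)
    (h : ∀ w, #(fiber c (c w) ∪ fiber p (p w)) < m * n)
    {w w' : V} (hww' : p w = p w') : c w = c w' := by
  by_contra hne
  have key : ∀ v, n < #(fiber c (c v) ∩ fiber p (p v)) + (m * n - #(fiber c (c v))) := by
    intro v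
    have hunion := card_union_add_card_inter (fiber c (c v)) (fiber p (p v))
    have hle := card_le_card (subset_union_left (s₁ := fiber c (c v)) (s₂ := fiber p (p v)))
    have := h v
    rw [hp] at hunion
    omega
  have hinter :
      #(fiber c (c w) ∩ fiber p (p w)) + #(fiber c (c w') ∩ fiber p (p w')) ≤ n := by
    rw [← hp (p w), ← hww', ← card_union_of_disjoint]
    · exact card_le_card (union_subset inter_subset_right inter_subset_right)
    · refine disjoint_left.mpr fun x hx hx' => hne ?_
      simp only [mem_inter, mem_fiber] at hx hx'
      rw [← hx.1, ← hx'.1]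
  have hpair : (m * n - #(fiber c (c w))) + (m * n - #(fiber c (c w'))) ≤ n :=
    (add_le_sum (fun _ _ => Nat.zero_le _) (mem_univ _) (mem_univ _) hne).trans hslack
  have := key w
  have := key w'
  omega

theorem exists_mul_le_card_fiber_union [Fintype ι] (hn : 0 < n) (hm : 0 < m)
    (hp : ∀ j, #(fiber p j) = n) (hκ : 2 ≤ Fintype.card κ)
    (hcard : m * Fintype.card κ ≤ Fintype.card ι + 1) :
    ∃ w, m * n ≤ #(fiber c (c w) ∪ fiber p (p w)) := by
  by_contra! h
  have hV : Fintype.card V = Fintype.card ι * n := by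
    rw [← sum_card_fiber p]; simp [hp]
  have hlt : ∀ i, #(fiber c i) < m * n := by
    intro i
    rcases (fiber c i).eq_empty_or_nonempty with hi | ⟨w, hw⟩
    · rw [hi, card_empty]; positivity
    · rw [← mem_fiber.mp hw]
      exact (card_le_card subset_union_left).trans_lt (h w)
  have hslack : ∑ i, (m * n - #(fiber c i)) ≤ n := by
    rw [sum_tsub_distrib _ fun i _ => (hlt i).le, sum_card_fiber, hV, sum_const, card_univ,
      smul_eq_mul]
    have : Fintype.card κ * (m * n) ≤ Fintype.card ι * n + n := by
      rw [← mul_assoc, mul_comm _ m, ← Nat.succ_mul]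
      exact Nat.mul_le_mul_right n hcard
    omega
  have hmult : ∀ i, #(fiber c i) ≤ (m - 1) * n := by
    intro i
    have hi := card_eq_card_image_mul_of_saturated p hp (s := fiber c i) fun x y hxy hx => by
      rw [mem_fiber] at hx ⊢
      rw [← hx, color_eq_of_part_eq p c hp hslack h hxy]
    have := hlt i
    rw [hi] at this ⊢
    exact Nat.mul_le_mul_right n (Nat.le_sub_one_of_lt (Nat.lt_of_mul_lt_mul_right this))
  have : Fintype.card ι * n ≤ Fintype.card κ * (m - 1) * n := by
    rw [← hV, ← sum_card_fiber c, mul_assoc, ← smul_eq_mul, ← card_univ]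
    exact sum_le_card_nsmul _ _ _ fun i _ => hmult i
  have := Nat.le_of_mul_le_mul_right this hn
  have : Fintype.card κ * (m - 1) + Fintype.card κ = m * Fintype.card κ := by
    rw [← Nat.mul_succ, Nat.succ_eq_add_one, Nat.sub_add_cancel hm, mul_comm]
  omega

lemma card_fiber_comp_fst {β γ : Type*} [Fintype β] (f : V → γ) (a : γ) :
    #(fiber (fun v : V × β => f v.1) a) = #(fiber f a) * Fintype.card β := by
  have : fiber (fun v : V × β => f v.1) a = fiber f a ×ˢ univ := by
    ext; simp
  rw [this, card_product, card_univ]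

end Fibers

namespace SimpleGraph

variable {V α : Type*} [Fintype V] (G : SimpleGraph V) [DecidableRel G.Adj]

lemma degree_add_card_le_of_disjoint (v : V) {s : Finset V}
    (hs : Disjoint (G.neighborFinset v) s) : G.degree v + #s ≤ Fintype.card V := by
  rw [← card_neighborFinset_eq_degree, ← card_union_of_disjoint hs]
  exact card_le_univ _

theorem minDegree_add_le_of_colorable {ι : Type*} [Fintype ι] (p : V → ι)
    (hG : ∀ v w, G.Adj v w → p v ≠ p w) {n m t : ℕ} (hn : 0 < n) (hm : 0 < m)
    (hp : ∀ j, #(fiber p j) = n) (ht : 2 ≤ t) (hcard : m * t ≤ Fintype.card ι + 1)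
    (hc : G.Colorable t) : G.minDegree + m * n ≤ Fintype.card V := by
  obtain ⟨c⟩ := hc
  obtain ⟨w, hw⟩ := exists_mul_le_card_fiber_union p c hn hm hp (by simpa using ht)
    (by simpa using hcard)
  have hdisj : Disjoint (G.neighborFinset w) (fiber c (c w) ∪ fiber p (p w)) := by
    refine Finset.disjoint_left.mpr fun x hx hx' => ?_
    rw [mem_neighborFinset] at hx
    rcases mem_union.mp hx' with h | h
    · exact c.valid hx (mem_fiber.mp h).symm
    · exact hG w x hx (mem_fiber.mp h).symm
  calc G.minDegree + m * n ≤ G.degree w + #(fiber c (c w) ∪ fiber p (p w)) :=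
        add_le_add (G.minDegree_le_degree w) hw
    _ ≤ Fintype.card V := G.degree_add_card_le_of_disjoint w hdisj

lemma degree_comap_top_add_card_fiber (f : V → α)
    [DecidableRel ((⊤ : SimpleGraph α).comap f).Adj] (v : V) :
    ((⊤ : SimpleGraph α).comap f).degree v + #(fiber f (f v)) = Fintype.card V := by
  rw [← card_neighborFinset_eq_degree, ← card_univ,
    ← card_filter_add_card_filter_not (s := univ) (fun w => f w ≠ f v)]
  congr 2
  · ext w; simp [eq_comm]
  · ext w; simp [eq_comm]

lemma le_minDegree_comap_top [Nonempty V] (f : V → α)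
    [DecidableRel ((⊤ : SimpleGraph α).comap f).Adj] {k : ℕ} (hf : ∀ a, #(fiber f a) ≤ k) :
    Fintype.card V - k ≤ ((⊤ : SimpleGraph α).comap f).minDegree := by
  refine le_minDegree_of_forall_le_degree _ _ fun v => ?_
  have := degree_comap_top_add_card_fiber f v
  have := hf (f v)
  omega

end SimpleGraph

lemma card_fiber_fst {r n : ℕ} (j : Fin r) :
    #(fiber (Prod.fst : Fin r × Fin n → Fin r) j) = n :=
  (card_fiber_comp_fst (β := Fin n) id j).trans (by simp [fiber, filter_eq'])

lemma card_fiber_div_le (r : ℕ) {m : ℕ} (hm : 0 < m) (q : ℕ) :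
    #(fiber (fun j : Fin r => (j : ℕ) / m) q) ≤ m :=
  calc #(fiber (fun j : Fin r => (j : ℕ) / m) q)
      = #((fiber (fun j : Fin r => (j : ℕ) / m) q).map Fin.valEmbedding) := (card_map _).symm
    _ ≤ #(Ico (q * m) (q * m + m)) := by
      refine card_le_card fun x hx => ?_
      obtain ⟨j, hj, rfl⟩ := mem_map.mp hx
      rw [mem_fiber] at hj
      rw [mem_Ico, ← hj]
      exact ⟨Nat.div_mul_le_self _ _, Nat.lt_div_mul_add hm⟩
    _ = m := by simp

theorem minDegree_le_of_isPartite_of_colorable {n m t r : ℕ} (hn : 0 < n) (hm : 0 < m)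
    (ht : 2 ≤ t) (hrt : m * t ≤ r + 1) {G : SimpleGraph (Fin r × Fin n)} (hG : IsPartite G)
    (hc : G.Colorable t) : G.minDegree ≤ (r - m) * n := by
  have := G.minDegree_add_le_of_colorable Prod.fst hG hn hm card_fiber_fst ht
    (by simpa using hrt) hc
  rw [Fintype.card_prod, Fintype.card_fin, Fintype.card_fin] at this
  rw [Nat.sub_mul]
  omega

theorem exists_isPartite_colorable_le_minDegree {n m t r : ℕ} (hn : 0 < n) (hr : 0 < r)
    (hrt : r < m * t) :
    ∃ G : SimpleGraph (Fin r × Fin n), IsPartite G ∧ G.Colorable t ∧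
      (r - m) * n ≤ G.minDegree := by
  have : Nonempty (Fin r × Fin n) := ⟨(⟨0, hr⟩, ⟨0, hn⟩)⟩
  have hm : 0 < m := Nat.pos_of_mul_pos_right (hr.trans hrt)
  refine ⟨(⊤ : SimpleGraph ℕ).comap fun v => (v.1 : ℕ) / m,
    fun v w h he => ?_, ⟨?_⟩, ?_⟩
  · simp [he] at h
  · refine SimpleGraph.Coloring.mk (fun v => ⟨(v.1 : ℕ) / m, ?_⟩) fun h => ?_
    · rw [Nat.div_lt_iff_lt_mul hm, mul_comm]; exact v.1.2.trans hrt
    · simpa [Fin.ext_iff] using h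
  · have hblock (q : ℕ) : #(fiber (fun v : Fin r × Fin n => (v.1 : ℕ) / m) q) ≤ m * n := by
      rw [card_fiber_comp_fst (fun j : Fin r => (j : ℕ) / m), Fintype.card_fin]
      exact Nat.mul_le_mul_right n (card_fiber_div_le r hm q)
    -- `minDegree` in the goal uses the classical `DecidableRel` instance, not the comap one
    convert SimpleGraph.le_minDegree_comap_top _ hblock using 1
    · simp [Nat.sub_mul]
    · congr

lemma deltaP_eq {n r t D : ℕ}
    (hle : ∀ G : SimpleGraph (Fin r × Fin n), IsPartite G → G.Colorable t →
      G.minDegree ≤ D)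
    (hex : ∃ G : SimpleGraph (Fin r × Fin n), IsPartite G ∧ G.Colorable t ∧
      D ≤ G.minDegree) :
    deltaP n r t = D := by
  obtain ⟨G, hG, hc, hD⟩ := hex
  refine IsGreatest.csSup_eq ⟨⟨G, hG, hc.chromaticNumber_le, (hle G hG hc).antisymm hD⟩, ?_⟩
  rintro _ ⟨G', hG', hχ, rfl⟩
  exact hle G' hG' (SimpleGraph.chromaticNumber_le_iff_colorable.mp hχ)

/-- For `m, t ≥ 3` and `r = mt - 1`, `δ(n,r,t) = (m(t-1)-1)n = (r-m)n`. -/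
theorem stmt16 (n m t r : ℕ) (hn : 1 ≤ n) (hm : 3 ≤ m) (ht : 3 ≤ t) (hr : r = m * t - 1) :
    deltaP n r t = (m * (t - 1) - 1) * n := by
  have hmt : 9 ≤ m * t := Nat.mul_le_mul hm ht
  have hrm : m * (t - 1) - 1 = r - m := by rw [Nat.mul_sub_one]; omega
  rw [hrm]
  exact deltaP_eq
    (fun _ hG hc =>
      minDegree_le_of_isPartite_of_colorable hn (by omega) (by omega) (by omega) hG hc)
    (exists_isPartite_colorable_le_minDegree hn (by omega) (by omega))
end

section
/- Let $r_0 \ge t_0 \ge 2$ and let $\Delta_0 \ge 0$ satisfy: for every $n_0 \ge 1$ there is an $r_0$-partite graph with parts of size $n_0$, maximum degree at most $\Delta_0 n_0$, and no crossing independent set of size $t_0$. Then for all integers $n, k \ge 2$, with $r = r_0 k$ and $t = k + t_0$, there is an $r$-partite graph $G$ with parts of size $n$, no crossing independent set of size $t$, and $\Delta(G) \le (r_0 - 1) \lceil \frac{\Delta_0 + (k-1)r_0}{\Delta_0 + k r_0 - 1} \cdot n \rceil$. -/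
/-!
Group the `r₀k` parts into `k` blocks of `r₀` parts and split every part into `m` core and
`n - m` rest vertices. Two cores are adjacent when they lie in different parts of the same block;
two rests are adjacent when they lie in different blocks, and inside each block the rests carry a
copy of a graph `G₀` with parts of size `n - m` as in the hypothesis. A crossing independent set
contains at most one core per block, and its rests lie in a single block, where they form a
crossing independent set of `G₀`; so it has fewer than `k + t₀` vertices. A core has degree at
most `(r₀ - 1)m` and a rest at most `((k - 1)r₀ + Δ₀)(n - m)`; the choice
`m = ⌈(Δ₀ + (k - 1)r₀) / (Δ₀ + kr₀ - 1) · n⌉` makes the second bound at most the first.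
-/

open scoped Classical

/-- `s` is a crossing independent set in the `r`-partite graph `G` on `Fin r × Fin n`
(parts are the fibers of `Prod.fst`): its vertices are pairwise non-adjacent and lie in
pairwise distinct parts. -/
def CrossIndep {r n : ℕ} (G : SimpleGraph (Fin r × Fin n))
    (s : Finset (Fin r × Fin n)) : Prop :=
  ∀ v ∈ s, ∀ w ∈ s, v ≠ w → ¬G.Adj v w ∧ v.1 ≠ w.1

open Finset

section CrossingIndep

variable {α β α' β' : Type*}

def IsCrossingIndepSet (G : SimpleGraph (α × β)) (s : Finset (α × β)) : Prop :=
  ∀ v ∈ s, ∀ w ∈ s, v ≠ w → ¬G.Adj v w ∧ v.1 ≠ w.1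

lemma crossIndep_iff {r n : ℕ} {G : SimpleGraph (Fin r × Fin n)} {s : Finset (Fin r × Fin n)} :
    CrossIndep G s ↔ IsCrossingIndepSet G s := Iff.rfl

variable {G : SimpleGraph (α × β)} {s t : Finset (α × β)}

lemma isCrossingIndepSet_empty : IsCrossingIndepSet G ∅ := by
  simp [IsCrossingIndepSet]

lemma IsCrossingIndepSet.mono (hs : IsCrossingIndepSet G s) (hts : t ⊆ s) :
    IsCrossingIndepSet G t :=
  fun v hv w hw => hs v (hts hv) w (hts hw)

lemma IsCrossingIndepSet.card_lt {m : ℕ}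
    (hG : ¬∃ t : Finset (α × β), t.card = m ∧ IsCrossingIndepSet G t)
    (hs : IsCrossingIndepSet G s) : s.card < m := by
  by_contra! hms
  obtain ⟨t, hts, rfl⟩ := exists_subset_card_eq hms
  exact hG ⟨t, rfl, hs.mono hts⟩

lemma IsCrossingIndepSet.map {G' : SimpleGraph (α' × β')} (f : α × β ↪ α' × β')
    (hf : ∀ v w, (f v).1 = (f w).1 → v.1 = w.1) (hs : IsCrossingIndepSet (G'.comap f) s) :
    IsCrossingIndepSet G' (s.map f) := by
  simp only [IsCrossingIndepSet, mem_map]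
  rintro _ ⟨v, hv, rfl⟩ _ ⟨w, hw, rfl⟩ hvw
  obtain ⟨hadj, hpart⟩ := hs v hv w hw (ne_of_apply_ne f hvw)
  exact ⟨hadj, fun h => hpart (hf v w h)⟩

end CrossingIndep

section BlowUp

variable {P R : Type*} (B C : Type*)

/-- The vertex `((b, p), x)` lies in part `p` of block `b`; it is a core vertex if `x = inl c`
and a rest vertex if `x = inr u`. -/
def blowUp (G₀ : SimpleGraph (P × R)) : SimpleGraph ((B × P) × (C ⊕ R)) where
  Adj
    | ((b, p), .inl _), ((b', p'), .inl _) => b = b' ∧ p ≠ p'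
    | ((b, p), .inr u), ((b', p'), .inr u') => b ≠ b' ∨ G₀.Adj (p, u) (p', u')
    | _, _ => False
  symm := ⟨by
    rintro ⟨⟨b, p⟩, c | u⟩ ⟨⟨b', p'⟩, c' | u'⟩ h
    · exact ⟨h.1.symm, h.2.symm⟩
    · exact h
    · exact h
    · exact h.imp Ne.symm G₀.adj_symm⟩
  loopless := ⟨by
    rintro ⟨⟨b, p⟩, c | u⟩ h
    · exact h.2 rfl
    · exact h.elim (· rfl) (G₀.loopless.irrefl _)⟩

variable {B C} {G₀ : SimpleGraph (P × R)}

@[simp] lemma blowUp_adj_inl_inl {b b' : B} {p p' : P} {c c' : C} :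
    (blowUp B C G₀).Adj ((b, p), .inl c) ((b', p'), .inl c') ↔ b = b' ∧ p ≠ p' := Iff.rfl

@[simp] lemma blowUp_adj_inr_inr {b b' : B} {p p' : P} {u u' : R} :
    (blowUp B C G₀).Adj ((b, p), .inr u) ((b', p'), .inr u') ↔
      b ≠ b' ∨ G₀.Adj (p, u) (p', u') := Iff.rfl

@[simp] lemma not_blowUp_adj_inl_inr {b b' : B} {p p' : P} {c : C} {u : R} :
    ¬(blowUp B C G₀).Adj ((b, p), .inl c) ((b', p'), .inr u) := id

@[simp] lemma not_blowUp_adj_inr_inl {b b' : B} {p p' : P} {c : C} {u : R} :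
    ¬(blowUp B C G₀).Adj ((b, p), .inr u) ((b', p'), .inl c) := id

end BlowUp

section BlowUpDegree

variable {P R B C : Type*} [Fintype P] [Fintype R] [Fintype B] [Fintype C]
  {G₀ : SimpleGraph (P × R)}

lemma degree_blowUp_inl_le (b : B) (p : P) (c : C) :
    (blowUp B C G₀).degree ((b, p), .inl c) ≤ (Fintype.card P - 1) * Fintype.card C := by
  have hsub : (blowUp B C G₀).neighborFinset ((b, p), .inl c) ⊆
      ((univ.erase p) ×ˢ univ).image fun q : P × C => ((b, q.1), .inl q.2) := by
    rintro ⟨⟨b', p'⟩, c' | u'⟩ h <;>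
      simp only [SimpleGraph.mem_neighborFinset, blowUp_adj_inl_inl, not_blowUp_adj_inl_inr,
        ne_eq] at h
    simpa [eq_comm, and_comm] using h
  calc (blowUp B C G₀).degree ((b, p), .inl c)
      ≤ ((univ.erase p) ×ˢ (univ : Finset C)).card := (card_le_card hsub).trans card_image_le
    _ = (Fintype.card P - 1) * Fintype.card C := by
        rw [card_product, card_erase_of_mem (mem_univ p), card_univ, card_univ]

lemma degree_blowUp_inr_le (b : B) (p : P) (u : R) :
    (blowUp B C G₀).degree ((b, p), .inr u) ≤
      (Fintype.card B - 1) * Fintype.card P * Fintype.card R + G₀.degree (p, u) := by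
  set crossBlocks := ((univ.erase b) ×ˢ (univ : Finset P)) ×ˢ (univ : Finset R)
  have hsub : (blowUp B C G₀).neighborFinset ((b, p), .inr u) ⊆
      crossBlocks.image (fun q => (q.1, .inr q.2)) ∪
        (G₀.neighborFinset (p, u)).image fun q => ((b, q.1), .inr q.2) := by
    rintro ⟨⟨b', p'⟩, c' | u'⟩ h <;>
      simp only [SimpleGraph.mem_neighborFinset, blowUp_adj_inr_inr, not_blowUp_adj_inr_inl,
        ne_eq] at h
    rcases h with h | h
    · simp [crossBlocks, Ne.symm h]
    · by_cases hb : b = b'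
      · subst hb; simp [h]
      · simp [crossBlocks, Ne.symm hb]
  calc (blowUp B C G₀).degree ((b, p), .inr u)
      ≤ crossBlocks.card + (G₀.neighborFinset (p, u)).card :=
        (card_le_card hsub).trans <|
          (card_union_le _ _).trans (add_le_add card_image_le card_image_le)
    _ = (Fintype.card B - 1) * Fintype.card P * Fintype.card R + G₀.degree (p, u) := by
        simp [crossBlocks, card_product, card_erase_of_mem]

lemma maxDegree_blowUp_le :
    (blowUp B C G₀).maxDegree ≤ max ((Fintype.card P - 1) * Fintype.card C)
      ((Fintype.card B - 1) * Fintype.card P * Fintype.card R + G₀.maxDegree) := by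
  refine SimpleGraph.maxDegree_le_of_forall_degree_le _ _ ?_
  rintro ⟨⟨b, p⟩, c | u⟩
  · exact le_max_of_le_left (degree_blowUp_inl_le b p c)
  · exact le_max_of_le_right <|
      (degree_blowUp_inr_le b p u).trans (add_le_add_right (G₀.degree_le_maxDegree _) _)

end BlowUpDegree

section BlowUpCrossing

variable {P R B C : Type*}
  {G₀ : SimpleGraph (P × R)} {s : Finset ((B × P) × (C ⊕ R))}

lemma IsCrossingIndepSet.card_filter_isLeft_le [Fintype B]
    (hs : IsCrossingIndepSet (blowUp B C G₀) s) :
    (s.filter fun v => v.2.isLeft).card ≤ Fintype.card B := by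
  refine (card_le_card_of_injOn (fun v => v.1.1) (fun _ _ => mem_univ _) ?_).trans_eq card_univ
  rintro ⟨⟨b, p⟩, c | u⟩ hv ⟨⟨b', p'⟩, c' | u'⟩ hw (hbb' : b = b') <;>
    simp only [coe_filter, Set.mem_ofPred_eq, Sum.isLeft_inl, Sum.isLeft_inr, Bool.false_eq_true,
      and_true, and_false] at hv hw
  by_contra hne
  obtain ⟨hadj, hpart⟩ := hs _ hv _ hw hne
  subst hbb'
  exact hadj ⟨rfl, fun hpp' => hpart (by rw [hpp'])⟩

lemma IsCrossingIndepSet.slice [Fintype P] [Fintype R]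
    (hs : IsCrossingIndepSet (blowUp B C G₀) s) (b : B) :
    IsCrossingIndepSet G₀ (univ.filter fun q : P × R => ((b, q.1), .inr q.2) ∈ s) := by
  rintro ⟨p, u⟩ hq ⟨p', u'⟩ hq' hne
  simp only [mem_filter, mem_univ, true_and] at hq hq'
  obtain ⟨hadj, hpart⟩ := hs _ hq _ hq' (by simpa using hne)
  exact ⟨fun h => hadj (Or.inr h), fun h => hpart (by simp_all)⟩

lemma IsCrossingIndepSet.card_filter_isRight_lt [Fintype P] [Fintype R] {t : ℕ}
    (hG₀ : ¬∃ s : Finset (P × R), s.card = t ∧ IsCrossingIndepSet G₀ s)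
    (hs : IsCrossingIndepSet (blowUp B C G₀) s) :
    (s.filter fun v => v.2.isRight).card < t := by
  rcases (s.filter fun v => v.2.isRight).eq_empty_or_nonempty with hempty | ⟨w₀, hw₀⟩
  · simpa [hempty] using (isCrossingIndepSet_empty (G := G₀)).card_lt hG₀
  rcases w₀ with ⟨⟨b₀, p₀⟩, c₀ | u₀⟩ <;>
    simp only [mem_filter, Sum.isRight_inl, Sum.isRight_inr, Bool.false_eq_true, and_true,
      and_false] at hw₀
  have hsub : (s.filter fun v => v.2.isRight) ⊆
      (univ.filter fun q : P × R => ((b₀, q.1), .inr q.2) ∈ s).image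
        fun q => ((b₀, q.1), .inr q.2) := by
    rintro ⟨⟨b, p⟩, c | u⟩ hv <;>
      simp only [mem_filter, Sum.isRight_inl, Sum.isRight_inr, Bool.false_eq_true, and_true,
        and_false] at hv
    obtain rfl : b = b₀ := by
      by_contra hne
      exact (hs _ hv _ hw₀ (by simp [hne])).1 (Or.inl hne)
    simpa using hv
  exact (card_le_card hsub).trans_lt <| card_image_le.trans_lt <| (hs.slice b₀).card_lt hG₀

lemma IsCrossingIndepSet.card_lt_of_blowUp [Fintype P] [Fintype R] [Fintype B] {t : ℕ}
    (hG₀ : ¬∃ s : Finset (P × R), s.card = t ∧ IsCrossingIndepSet G₀ s)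
    (hs : IsCrossingIndepSet (blowUp B C G₀) s) :
    s.card < Fintype.card B + t := by
  rw [← card_filter_add_card_filter_not (p := fun v => v.2.isLeft)]
  simp only [Bool.not_eq_true, Sum.isLeft_eq_false]
  exact add_lt_add_of_le_of_lt hs.card_filter_isLeft_le (hs.card_filter_isRight_lt hG₀)

end BlowUpCrossing

lemma maxDegree_blowUp_fin_le {r₀ k m l : ℕ} (hr₀ : 1 ≤ r₀) (hk : 1 ≤ k) {Δ₀ : ℝ}
    {G₀ : SimpleGraph (Fin r₀ × Fin l)} (hG₀ : (G₀.maxDegree : ℝ) ≤ Δ₀ * l)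
    (hbalance : (Δ₀ + ((k : ℝ) - 1) * r₀) * l ≤ ((r₀ : ℝ) - 1) * m) :
    ((blowUp (Fin k) (Fin m) G₀).maxDegree : ℝ) ≤ ((r₀ : ℝ) - 1) * m := by
  refine (Nat.cast_le.2 maxDegree_blowUp_le).trans ?_
  simp only [Fintype.card_fin, Nat.cast_max]
  refine max_le ?_ ?_
  · push_cast [Nat.cast_sub hr₀]
    rfl
  · push_cast [Nat.cast_sub hk]
    linarith

lemma exists_maxDegree_le_of_forall_one_le {r₀ t₀ : ℕ} (ht₀ : t₀ ≠ 0) {Δ₀ : ℝ}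
    (hyp : ∀ n₀ : ℕ, 1 ≤ n₀ → ∃ G₀ : SimpleGraph (Fin r₀ × Fin n₀),
      (G₀.maxDegree : ℝ) ≤ Δ₀ * n₀ ∧
      ¬∃ s : Finset (Fin r₀ × Fin n₀), s.card = t₀ ∧ CrossIndep G₀ s) :
    ∀ n₀ : ℕ, ∃ G₀ : SimpleGraph (Fin r₀ × Fin n₀),
      (G₀.maxDegree : ℝ) ≤ Δ₀ * n₀ ∧
      ¬∃ s : Finset (Fin r₀ × Fin n₀), s.card = t₀ ∧ CrossIndep G₀ s
  | 0 => ⟨⊥, by simp, fun ⟨s, hs, _⟩ => ht₀ (by simpa [eq_empty_of_isEmpty s] using hs.symm)⟩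
  | n₀ + 1 => hyp _ n₀.succ_pos

lemma exists_nat_eq_ceil_div_mul {a c : ℝ} (ha : 0 ≤ a) (hc : 0 < c) (n : ℕ) :
    ∃ m : ℕ, m ≤ n ∧ (m : ℤ) = ⌈a / (a + c) * n⌉ ∧ a * (n - m : ℕ) ≤ c * m := by
  have hac : 0 < a + c := by linarith
  set M := ⌈a / (a + c) * n⌉
  have hM₀ : 0 ≤ M := Int.ceil_nonneg (by positivity)
  have hMn : M ≤ n := Int.ceil_le.2 <| by
    simpa using mul_le_of_le_one_left (Nat.cast_nonneg n) ((div_le_one hac).2 (by linarith))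
  have hM : ((M.toNat : ℕ) : ℝ) = M := by exact_mod_cast Int.toNat_of_nonneg hM₀
  refine ⟨M.toNat, by omega, Int.toNat_of_nonneg hM₀, ?_⟩
  have hceil : a / (a + c) * n ≤ M := Int.le_ceil _
  rw [div_mul_eq_mul_div, div_le_iff₀ hac] at hceil
  rw [Nat.cast_sub (by omega), hM]
  linarith

theorem stmt18_general (r₀ t₀ : ℕ) (ht₀ : 2 ≤ t₀) (htr : t₀ ≤ r₀) (Δ₀ : ℝ) (hΔ₀ : 0 ≤ Δ₀)
    (hyp : ∀ n₀ : ℕ, 1 ≤ n₀ → ∃ G₀ : SimpleGraph (Fin r₀ × Fin n₀),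
      (G₀.maxDegree : ℝ) ≤ Δ₀ * n₀ ∧
      ¬∃ s : Finset (Fin r₀ × Fin n₀), s.card = t₀ ∧ CrossIndep G₀ s)
    (n k : ℕ) (hk : 2 ≤ k) :
    ∃ G : SimpleGraph (Fin (r₀ * k) × Fin n),
      (¬∃ s : Finset (Fin (r₀ * k) × Fin n), s.card = k + t₀ ∧ CrossIndep G s) ∧
      (G.maxDegree : ℝ) ≤ ((r₀ : ℝ) - 1) *
        (⌈(Δ₀ + ((k : ℝ) - 1) * r₀) / (Δ₀ + (k : ℝ) * r₀ - 1) * n⌉ : ℤ) := by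
  have hr₀ : (2 : ℝ) ≤ r₀ := by exact_mod_cast ht₀.trans htr
  have hk₁ : (1 : ℝ) ≤ k := by exact_mod_cast (by omega : 1 ≤ k)
  set a : ℝ := Δ₀ + ((k : ℝ) - 1) * r₀
  have ha : 0 ≤ a := add_nonneg hΔ₀ (mul_nonneg (by linarith) (by linarith))
  rw [show Δ₀ + (k : ℝ) * r₀ - 1 = a + (r₀ - 1) by ring]
  have hc : (0 : ℝ) < r₀ - 1 := by linarith
  obtain ⟨m, hmn, hm, hbalance⟩ := exists_nat_eq_ceil_div_mul ha hc n
  obtain ⟨G₀, hG₀deg, hG₀⟩ := exists_maxDegree_le_of_forall_one_le (by omega) hyp (n - m)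
  let e : Fin (r₀ * k) × Fin n ≃ (Fin k × Fin r₀) × (Fin m ⊕ Fin (n - m)) :=
    (finProdFinEquiv.symm.trans (Equiv.prodComm _ _)).prodCongr
      ((finCongr (by omega)).trans finSumFinEquiv.symm)
  refine ⟨(blowUp (Fin k) (Fin m) G₀).comap e, ?_, ?_⟩
  · rintro ⟨s, hcard, hs⟩
    simp only [crossIndep_iff] at hG₀ hs
    have := (hs.map e.toEmbedding fun v w h => Equiv.injective _ h).card_lt_of_blowUp hG₀
    rw [card_map, Fintype.card_fin] at this
    omega
  · rw [(SimpleGraph.Iso.comap e _).maxDegree_eq, ← hm, Int.cast_natCast]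
    exact maxDegree_blowUp_fin_le (by omega) (by omega) hG₀deg hbalance

/-- Proposition 7.1: suppose for every `n₀ ≥ 1` there is an `r₀`-partite graph with parts
of size `n₀`, maximum degree at most `Δ₀·n₀`, and no crossing independent set of size `t₀`.
Then for all `n, k ≥ 2`, with `r = r₀k` and `t = k + t₀`, there is an `r`-partite graph `G`
with parts of size `n`, no crossing independent set of size `t`, and
`Δ(G) ≤ (r₀-1)·⌈((Δ₀+(k-1)r₀)/(Δ₀+kr₀-1))·n⌉`. -/
theorem stmt18 (r₀ t₀ : ℕ) (ht₀ : 2 ≤ t₀) (htr : t₀ ≤ r₀) (Δ₀ : ℝ) (hΔ₀ : 0 ≤ Δ₀)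
    (hyp : ∀ n₀ : ℕ, 1 ≤ n₀ → ∃ G₀ : SimpleGraph (Fin r₀ × Fin n₀),
      (G₀.maxDegree : ℝ) ≤ Δ₀ * n₀ ∧
      ¬∃ s : Finset (Fin r₀ × Fin n₀), s.card = t₀ ∧ CrossIndep G₀ s)
    (n k : ℕ) (hn : 2 ≤ n) (hk : 2 ≤ k) :
    ∃ G : SimpleGraph (Fin (r₀ * k) × Fin n),
      (¬∃ s : Finset (Fin (r₀ * k) × Fin n), s.card = k + t₀ ∧ CrossIndep G s) ∧
      (G.maxDegree : ℝ) ≤ ((r₀ : ℝ) - 1) *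
        (⌈(Δ₀ + ((k : ℝ) - 1) * r₀) / (Δ₀ + (k : ℝ) * r₀ - 1) * n⌉ : ℤ) :=
  stmt18_general r₀ t₀ ht₀ htr Δ₀ hΔ₀ hyp n k hk
end
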